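/- arXiv:1612.04338 — 8 statements merged into one kernel-verified Lean document; each statement's English description precedes it below -/
import Mathlib

section
/- Let F be a field and let T : Fin d₁ → Fin d₂ → Fin d₃ → F be a 3-dimensional tensor of tensor rank r over F. Let H ⊆ Fin d₃ be a set of indices such that the frontal slices M_h = (fun i j ↦ T i j h) for h ∈ H are linearly independent as matrices, and each M_h has matrix rank 1, say M_h i j = u_h i * v_h j. Then there exist vectors u_ℓ : Fin d₁ → F, v_ℓ : Fin d₂ → F, w_ℓ : Fin d₃ → F for ℓ = 1, …, r with T i j k = Σ_{ℓ=1}^r (u_ℓ i) * (v_ℓ j) * (w_ℓ k) for all i, j, k, together with an injection ι : H → {1,…,r} such that for every h ∈ H the matrix (fun i j ↦ u_{ι(h)} i * v_{ι(h)} j) equals M_h. In other words, any set of linearly independent rank-1 frontal slices of T can be assumed to occur among the rank-1 terms of a minimum-rank expansion of T. -/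
/-- The tensor rank of a 3-dimensional tensor `T` over a field `F`:
the least `r` such that `T` is a sum of `r` rank-1 (outer product) tensors. -/
noncomputable def tensorRank {F : Type*} [Field F] {d₁ d₂ d₃ : ℕ}
    (T : Fin d₁ → Fin d₂ → Fin d₃ → F) : ℕ :=
  sInf {r : ℕ | ∃ (u : Fin r → Fin d₁ → F) (v : Fin r → Fin d₂ → F) (w : Fin r → Fin d₃ → F),
    ∀ i j k, T i j k = ∑ l, u l i * v l j * w l k}

/-- Håstad's Lemma 2: a set of linearly independent rank-1 frontal slices of a
rank-`r` tensor can be assumed to occur among the rank-1 terms of a rank-`r`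
expansion of the tensor. -/
theorem haastad_independent_slices_in_expansion {F : Type*} [Field F] {d₁ d₂ d₃ : ℕ}
    (T : Fin d₁ → Fin d₂ → Fin d₃ → F) (r : ℕ) (hr : tensorRank T = r)
    (H : Set (Fin d₃))
    (hindep : LinearIndependent F
      (fun h : H => (Matrix.of fun i j => T i j (h : Fin d₃)) : H → Matrix (Fin d₁) (Fin d₂) F))
    (uH : Fin d₃ → Fin d₁ → F) (vH : Fin d₃ → Fin d₂ → F)
    (hrank1 : ∀ h ∈ H, (Matrix.of fun i j => T i j h).rank = 1)
    (hfact : ∀ h ∈ H, ∀ i j, T i j h = uH h i * vH h j) :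
    ∃ (u : Fin r → Fin d₁ → F) (v : Fin r → Fin d₂ → F) (w : Fin r → Fin d₃ → F)
      (ι : H → Fin r),
      (∀ i j k, T i j k = ∑ l, u l i * v l j * w l k) ∧
      Function.Injective ι ∧
      ∀ h : H, ∀ i j, u (ι h) i * v (ι h) j = T i j (h : Fin d₃) := by
  unfold tensorRank at hr
  classical
  -- Step 1: a rank-r expansion exists
  have hne : ({n : ℕ | ∃ (u : Fin n → Fin d₁ → F) (v : Fin n → Fin d₂ → F)
      (w : Fin n → Fin d₃ → F),
      ∀ i j k, T i j k = ∑ l, u l i * v l j * w l k} : Set ℕ).Nonempty := by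
    refine ⟨d₁ * d₂ * d₃, ?_⟩
    let e : Fin (d₁ * d₂ * d₃) ≃ (Fin d₁ × Fin d₂) × Fin d₃ :=
      finProdFinEquiv.symm.trans (Equiv.prodCongr finProdFinEquiv.symm (Equiv.refl _))
    refine ⟨fun p i => if i = (e p).1.1 then T (e p).1.1 (e p).1.2 (e p).2 else 0,
        fun p j => if j = (e p).1.2 then 1 else 0,
        fun p k => if k = (e p).2 then 1 else 0, fun i j k => ?_⟩
    rw [← Equiv.sum_comp e.symm]
    simp [Fintype.sum_prod_type]
  have hmem := Nat.sInf_mem hne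
  rw [hr] at hmem
  obtain ⟨u, v, w, hT⟩ := hmem
  -- Step 2: coefficient vectors of the slices are linearly independent
  set c : H → (Fin r → F) := fun h l => w l (h : Fin d₃) with hc_def
  let A : Fin r → Matrix (Fin d₁) (Fin d₂) F := fun l => Matrix.of fun i j => u l i * v l j
  let φ : (Fin r → F) →ₗ[F] Matrix (Fin d₁) (Fin d₂) F :=
    { toFun := fun x => ∑ l, x l • A l
      map_add' := by intro x y; simp [add_smul, Finset.sum_add_distrib]
      map_smul' := by intro a x; simp [smul_smul, Finset.smul_sum] }
  have hφc : ∀ h : H, φ (c h) = Matrix.of fun i j => T i j (h : Fin d₃) := by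
    intro h
    ext i j
    simp only [φ, A, LinearMap.coe_mk, AddHom.coe_mk, Matrix.sum_apply, Matrix.smul_apply,
      Matrix.of_apply, smul_eq_mul, hT i j (h : Fin d₃)]
    exact Finset.sum_congr rfl fun l _ => by ring
  have hc : LinearIndependent F c := by
    apply LinearIndependent.of_comp φ
    have : ⇑φ ∘ c = fun h : H => (Matrix.of fun i j => T i j (h : Fin d₃)) := by
      funext h; exact hφc h
    rw [this]; exact hindep
  -- Step 3: extend range c to a basis using standard basis vectors
  set pb : Fin r → (Fin r → F) := ⇑(Pi.basisFun F (Fin r)) with hpb_def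
  set t : Set (Fin r → F) := Set.range c ∪ Set.range pb with ht_def
  have hsub : Set.range c ⊆ t := Set.subset_union_left
  have hcr : LinearIndepOn F id (Set.range c) :=
    hc.linearIndepOn_id
  set bset : Set (Fin r → F) := hcr.extend hsub with hbset_def
  have hb1 : Set.range c ⊆ bset := hcr.subset_extend hsub
  have hb2 : bset ⊆ t := hcr.extend_subset hsub
  have hbli : LinearIndependent F (fun x : bset => (x : Fin r → F)) :=
    hcr.linearIndepOn_extend hsub
  have hbspan : ⊤ ≤ Submodule.span F (Set.range (fun x : bset => (x : Fin r → F))) := by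
    rw [Subtype.range_coe]
    have h1 : Set.range pb ⊆ Submodule.span F bset :=
      fun x hx => hcr.subset_span_extend hsub (Or.inr hx)
    have h2 : Submodule.span F (Set.range pb) ≤ Submodule.span F bset :=
      Submodule.span_le.mpr h1
    rw [(Pi.basisFun F (Fin r)).span_eq] at h2
    exact h2
  let B : Module.Basis bset F (Fin r → F) := Module.Basis.mk hbli hbspan
  haveI : Fintype bset := FiniteDimensional.fintypeBasisIndex B
  have hcard : Fintype.card bset = r := by
    have := Module.finrank_eq_card_basis B
    rw [Module.finrank_fin_fun] at this
    exact this.symm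
  let σ : Fin r ≃ bset := (Fintype.equivFinOfCardEq hcard).symm
  -- Step 4: each basis vector gives a rank-1 term
  have hpick : ∀ x : bset, ∃ (a : Fin d₁ → F) (bb : Fin d₂ → F),
      (∀ i j, a i * bb j = ∑ l, (x : Fin r → F) l * (u l i * v l j)) ∧
      (∀ h : H, c h = (x : Fin r → F) → ∀ i j, a i * bb j = T i j (h : Fin d₃)) := by
    intro x
    by_cases hx : (x : Fin r → F) ∈ Set.range c
    · obtain ⟨h₀, hh₀⟩ := hx
      refine ⟨uH (h₀ : Fin d₃), vH (h₀ : Fin d₃), fun i j => ?_, fun h hh i j => ?_⟩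
      · rw [← hh₀]
        have : ∑ l, c h₀ l * (u l i * v l j) = T i j (h₀ : Fin d₃) := by
          rw [hT i j (h₀ : Fin d₃)]
          exact Finset.sum_congr rfl fun l _ => by simp [hc_def]; ring
        rw [this, hfact _ h₀.2]
      · have : h = h₀ := hc.injective (by rw [hh, hh₀])
        rw [this, hfact _ h₀.2]
    · have hx' : (x : Fin r → F) ∈ Set.range pb := by
        rcases hb2 x.2 with h | h
        · exact absurd h hx
        · exact h
      obtain ⟨l₀, hl₀⟩ := hx'
      refine ⟨u l₀, v l₀, fun i j => ?_, fun h hh i j => ?_⟩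
      · rw [← hl₀]
        simp [hpb_def, Pi.single_apply]
      · exact absurd ⟨h, hh⟩ hx
  choose a bb h1 h2 using hpick
  -- Step 5: assemble the new expansion
  refine ⟨fun s => a (σ s), fun s => bb (σ s),
      fun s k => B.repr (fun l => w l k) (σ s),
      fun h => σ.symm ⟨c h, hb1 ⟨h, rfl⟩⟩, ?_, ?_, ?_⟩
  · intro i j k
    have hrep : (fun l => w l k) = ∑ x : bset, B.repr (fun l => w l k) x • (x : Fin r → F) := by
      conv_lhs => rw [← B.sum_repr (fun l => w l k)]
      exact Finset.sum_congr rfl fun x _ => by rw [Module.Basis.mk_apply]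
    calc T i j k = ∑ l, u l i * v l j * w l k := hT i j k
      _ = ∑ l, u l i * v l j * (∑ x : bset, B.repr (fun l => w l k) x • (x : Fin r → F)) l := by
          refine Finset.sum_congr rfl fun l _ => ?_
          rw [← hrep]
      _ = ∑ l, ∑ x : bset, B.repr (fun l => w l k) x * ((x : Fin r → F) l * (u l i * v l j)) := by
          refine Finset.sum_congr rfl fun l _ => ?_
          rw [Finset.sum_apply, Finset.mul_sum]
          exact Finset.sum_congr rfl fun x _ => by simp [smul_eq_mul]; ring
      _ = ∑ x : bset, B.repr (fun l => w l k) x * ∑ l, (x : Fin r → F) l * (u l i * v l j) := by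
          rw [Finset.sum_comm]
          exact Finset.sum_congr rfl fun x _ => by rw [Finset.mul_sum]
      _ = ∑ x : bset, a x i * bb x j * B.repr (fun l => w l k) x := by
          refine Finset.sum_congr rfl fun x _ => ?_
          rw [← h1 x i j]; ring
      _ = ∑ s : Fin r, a (σ s) i * bb (σ s) j * B.repr (fun l => w l k) (σ s) := by
          rw [Equiv.sum_comp σ (fun x => a x i * bb x j * B.repr (fun l => w l k) x)]
  · intro h h' hhh'
    have := σ.symm.injective hhh'
    have hch : c h = c h' := congrArg Subtype.val this
    exact hc.injective hch
  · intro h i j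
    have hσ : σ (σ.symm ⟨c h, hb1 ⟨h, rfl⟩⟩) = ⟨c h, hb1 ⟨h, rfl⟩⟩ := σ.apply_symm_apply _
    simp only [Equiv.apply_symm_apply]
    exact h2 _ h rfl i j
end

section
/- Let F be a field, let B be a d₁ × d₂ matrix over F, and let A₁, …, A_n be d₁ × d₂ matrices over F each of matrix rank at most 1. Define the 3-dimensional tensor T : Fin d₁ → Fin d₂ → Fin (n+1) → F whose frontal slice at index i is A_i for 1 ≤ i ≤ n and whose frontal slice at index n+1 is B. If there exist scalars λ₁, …, λ_n ∈ F such that the matrix B + Σ_{i=1}^n λ_i A_i has matrix rank at most r, then T has tensor rank at most r + n over F. -/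
lemma exists_decomp {F : Type*} [Field F] {d₁ d₂ k : ℕ}
    (M : Matrix (Fin d₁) (Fin d₂) F) (h : M.rank ≤ k) :
    ∃ (u : Fin k → Fin d₁ → F) (v : Fin k → Fin d₂ → F),
      ∀ i j, M i j = ∑ l, u l i * v l j := by
  set W := LinearMap.range M.mulVecLin with hW
  have hfr : Module.finrank F W = M.rank := rfl
  let b := Module.finBasis F W
  have hcard : Module.finrank F W ≤ k := hfr ▸ h
  have colmem : ∀ j, (fun i => M i j) ∈ W := by
    intro j
    exact ⟨Pi.single j 1, by simp [Matrix.mulVecLin_apply]; rfl⟩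
  set fr := Module.finrank F W with hfrdef
  let col : Fin d₂ → W := fun j => ⟨fun i => M i j, colmem j⟩
  refine ⟨fun l i => if hl : (l : ℕ) < fr then (b ⟨l, hl⟩ : Fin d₁ → F) i else 0,
    fun l j => if hl : (l : ℕ) < fr then b.repr (col j) ⟨l, hl⟩ else 0, ?_⟩
  intro i j
  have hrep := b.sum_repr (col j)
  have hrep' : M i j = ∑ l, b.repr (col j) l * (b l : Fin d₁ → F) i := by
    have := congrArg (fun x : W => (x : Fin d₁ → F) i) hrep
    simp only [Submodule.coe_sum, Submodule.coe_smul, Finset.sum_apply, Pi.smul_apply, smul_eq_mul] at this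
    exact this.symm
  set H : ℕ → F := fun l =>
    if hl : l < fr then (b ⟨l, hl⟩ : Fin d₁ → F) i * b.repr (col j) ⟨l, hl⟩ else 0 with hH
  have h1 : ∑ l : Fin fr, b.repr (col j) l * (b l : Fin d₁ → F) i
      = ∑ l ∈ Finset.range fr, H l := by
    rw [Finset.sum_range fun l => H l]
    refine Finset.sum_congr rfl fun l _ => ?_
    simp [hH, l.isLt, mul_comm]
  have h2 : (∑ l : Fin k, (if hl : (l : ℕ) < fr then (b ⟨l, hl⟩ : Fin d₁ → F) i else 0) *
      (if hl : (l : ℕ) < fr then b.repr (col j) ⟨l, hl⟩ else 0)) = ∑ l ∈ Finset.range k, H l := by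
    rw [Finset.sum_range fun l => H l]
    refine Finset.sum_congr rfl fun l _ => ?_
    by_cases hl : (l : ℕ) < fr <;> simp [hH, hl]
  rw [hrep', h1, h2]
  refine Finset.sum_subset (Finset.range_subset_range.mpr hcard) fun x _ hx => ?_
  simp [hH, Finset.mem_range.not.mp hx]


/-- If the slices `A i` of a tensor all have matrix rank at most 1, and a shift
`B + ∑ λᵢ Aᵢ` of the remaining slice `B` has matrix rank at most `r`, then the
tensor has tensor rank at most `r + n`. -/
theorem tensorRank_le_of_minrank_le {F : Type*} [Field F] {d₁ d₂ : ℕ} (n r : ℕ)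
    (B : Matrix (Fin d₁) (Fin d₂) F) (A : Fin n → Matrix (Fin d₁) (Fin d₂) F)
    (hA : ∀ i, (A i).rank ≤ 1)
    (T : Fin d₁ → Fin d₂ → Fin (n + 1) → F)
    (hTA : ∀ k : Fin n, ∀ i j, T i j k.castSucc = A k i j)
    (hTB : ∀ i j, T i j (Fin.last n) = B i j)
    (lam : Fin n → F)
    (hrank : (B + ∑ i, lam i • A i).rank ≤ r) :
    tensorRank T ≤ r + n := by
  obtain ⟨p, q, hpq⟩ := exists_decomp _ hrank
  -- rank-1 decompositions of each A i
  have hAi : ∀ i : Fin n, ∃ (a : Fin d₁ → F) (c : Fin d₂ → F), ∀ x y, A i x y = a x * c y := by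
    intro i
    obtain ⟨a, c, hac⟩ := exists_decomp _ (hA i)
    exact ⟨a 0, c 0, fun x y => by simpa using hac x y⟩
  choose a c hac using hAi
  apply Nat.sInf_le
  refine ⟨Fin.addCases (fun l => p l) (fun i => a i),
    Fin.addCases (fun l => q l) (fun i => c i),
    Fin.addCases (fun _ k => if k = Fin.last n then 1 else 0)
      (fun i k => if k = i.castSucc then 1 else if k = Fin.last n then -lam i else 0), ?_⟩
  intro x y k
  rw [Fin.sum_univ_add]
  simp only [Fin.addCases_left, Fin.addCases_right]
  induction k using Fin.lastCases with
  | last =>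
    have h1 : ∀ i : Fin n, ¬ (Fin.last n = Fin.castSucc i) := fun i h =>
      (Fin.castSucc_lt_last i).ne' h
    simp only [if_pos rfl, mul_one, h1, if_false, if_neg]
    have hB := hpq x y
    simp only [Matrix.add_apply, Matrix.sum_apply, Matrix.smul_apply, smul_eq_mul] at hB
    rw [hTB]
    have : B x y = (∑ l, p l x * q l y) - ∑ i, lam i * A i x y := by
      rw [← hB]; ring
    rw [this, sub_eq_add_neg]
    simp only [if_true, mul_one]
    congr 1
    rw [neg_eq_iff_eq_neg, ← Finset.sum_neg_distrib]
    exact Finset.sum_congr rfl fun i _ => by rw [hac i x y]; ring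
  | cast k' =>
    have h1 : ¬ (Fin.castSucc k' = Fin.last n) := (Fin.castSucc_lt_last k').ne
    simp only [h1, if_false, mul_zero, Finset.sum_const_zero, zero_add]
    rw [hTA]
    rw [Finset.sum_eq_single k']
    · simp [hac k' x y]
    · intro i _ hi
      have : ¬ (Fin.castSucc k' = Fin.castSucc i) := fun h => hi (Fin.castSucc_injective n h).symm
      simp [this, h1]
    · simp
end

section
/- Let F be a field, let B be a d₁ × d₂ matrix over F, and let A₁, …, A_n be d₁ × d₂ matrices over F, each of matrix rank exactly 1 and linearly independent as a family of matrices. Define the 3-dimensional tensor T : Fin d₁ → Fin d₂ → Fin (n+1) → F whose frontal slice at index i is A_i for 1 ≤ i ≤ n and whose frontal slice at index n+1 is B. If T has tensor rank at most r + n over F, then there exist scalars λ₁, …, λ_n ∈ F such that the matrix B + Σ_{i=1}^n λ_i A_i has matrix rank at most r. -/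
lemma aux_rank_add_le {F : Type*} [Field F] {d₁ d₂ : ℕ} (A B : Matrix (Fin d₁) (Fin d₂) F) :
    (A + B).rank ≤ A.rank + B.rank := by
  have h : LinearMap.range (A + B).mulVecLin ≤
      LinearMap.range A.mulVecLin ⊔ LinearMap.range B.mulVecLin := by
    rw [Matrix.mulVecLin_add]
    rintro x ⟨y, rfl⟩
    exact Submodule.add_mem_sup ⟨y, rfl⟩ ⟨y, rfl⟩
  calc (A + B).rank
      ≤ Module.finrank F ↥(LinearMap.range A.mulVecLin ⊔ LinearMap.range B.mulVecLin) :=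
        Submodule.finrank_mono h
    _ ≤ A.rank + B.rank := Submodule.finrank_add_le_finrank_add_finrank _ _


lemma aux_rank_finset_sum_le {F : Type*} [Field F] {d₁ d₂ : ℕ} {ι : Type*}
    (s : Finset ι) (f : ι → Matrix (Fin d₁) (Fin d₂) F) :
    (∑ l ∈ s, f l).rank ≤ ∑ l ∈ s, (f l).rank := by
  classical
  induction s using Finset.induction with
  | empty => simp [Matrix.rank_zero]
  | insert _ _ h ih =>
    rw [Finset.sum_insert h, Finset.sum_insert h]
    exact le_trans (aux_rank_add_le _ _) (by omega)

lemma aux_rank_vecMulVec_le {F : Type*} [Field F] {d₁ d₂ : ℕ} (u : Fin d₁ → F) (v : Fin d₂ → F) :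
    (Matrix.vecMulVec u v).rank ≤ 1 := by
  rw [Matrix.vecMulVec_eq (Fin 1)]
  exact le_trans (Matrix.rank_mul_le_right _ _)
    (le_trans (Matrix.rank_le_card_height _) (by simp))

lemma aux_decomp_mem {F : Type*} [Field F] {d₁ d₂ d₃ : ℕ} (T : Fin d₁ → Fin d₂ → Fin d₃ → F) :
    ∃ (u : Fin (d₁*d₂*d₃) → Fin d₁ → F) (v : Fin (d₁*d₂*d₃) → Fin d₂ → F)
      (w : Fin (d₁*d₂*d₃) → Fin d₃ → F),
      ∀ i j k, T i j k = ∑ l, u l i * v l j * w l k := by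
  classical
  have hcard : Fintype.card (Fin d₁ × Fin d₂ × Fin d₃) = d₁ * d₂ * d₃ := by
    simp [mul_assoc]
  let e : Fin d₁ × Fin d₂ × Fin d₃ ≃ Fin (d₁*d₂*d₃) := Fintype.equivFinOfCardEq hcard
  refine ⟨fun l i => if i = (e.symm l).1 then T (e.symm l).1 (e.symm l).2.1 (e.symm l).2.2 else 0,
          fun l j => if j = (e.symm l).2.1 then 1 else 0,
          fun l k => if k = (e.symm l).2.2 then 1 else 0, ?_⟩
  intro i j k
  rw [← Equiv.sum_comp e (fun l => _)]
  simp only [Equiv.symm_apply_apply]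
  rw [Fintype.sum_prod_type]
  simp [Fintype.sum_prod_type, Finset.sum_ite_eq, eq_comm]

/-- If the slices `A i` of a tensor are linearly independent matrices of rank exactly 1
and the tensor (with remaining slice `B`) has tensor rank at most `r + n`, then some
shift `B + ∑ λᵢ Aᵢ` has matrix rank at most `r`. -/
theorem minrank_le_of_tensorRank_le {F : Type*} [Field F] {d₁ d₂ : ℕ} (n r : ℕ)
    (B : Matrix (Fin d₁) (Fin d₂) F) (A : Fin n → Matrix (Fin d₁) (Fin d₂) F)
    (hA : ∀ i, (A i).rank = 1)
    (hindep : LinearIndependent F A)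
    (T : Fin d₁ → Fin d₂ → Fin (n + 1) → F)
    (hTA : ∀ k : Fin n, ∀ i j, T i j k.castSucc = A k i j)
    (hTB : ∀ i j, T i j (Fin.last n) = B i j)
    (hrank : tensorRank T ≤ r + n) :
    ∃ lam : Fin n → F, (B + ∑ i, lam i • A i).rank ≤ r := by
  classical
  set S : Set ℕ := {r : ℕ | ∃ (u : Fin r → Fin d₁ → F) (v : Fin r → Fin d₂ → F)
    (w : Fin r → Fin (n+1) → F), ∀ i j k, T i j k = ∑ l, u l i * v l j * w l k} with hS
  have hne : S.Nonempty := ⟨d₁ * d₂ * (n+1), aux_decomp_mem T⟩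
  have hmem : tensorRank T ∈ S := Nat.sInf_mem hne
  set m := tensorRank T with hmdef
  obtain ⟨u, v, w, hdec⟩ := hmem
  -- slice coefficient vectors
  set c : Fin n → Fin m → F := fun k l => w l k.castSucc with hc
  set cB : Fin m → F := fun l => w l (Fin.last n) with hcB
  set M : Fin m → Matrix (Fin d₁) (Fin d₂) F := fun l => Matrix.vecMulVec (u l) (v l) with hM
  have hAc : ∀ k, A k = ∑ l, c k l • M l := by
    intro k
    ext i j
    rw [← hTA k i j, hdec]
    simp [Matrix.sum_apply, Matrix.vecMulVec_apply, hc, hM]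
    exact Finset.sum_congr rfl fun l _ => by ring
  have hBc : B = ∑ l, cB l • M l := by
    ext i j
    rw [← hTB i j, hdec]
    simp [Matrix.sum_apply, Matrix.vecMulVec_apply, hcB, hM]
    exact Finset.sum_congr rfl fun l _ => by ring
  -- the linear map sending coefficients to matrices
  let ψ : (Fin m → F) →ₗ[F] Matrix (Fin d₁) (Fin d₂) F :=
    { toFun := fun x => ∑ l, x l • M l
      map_add' := by intro x y; simp [add_smul, Finset.sum_add_distrib]
      map_smul' := by intro a x; simp [smul_smul, Finset.smul_sum] }
  have hcomp : ψ ∘ c = A := by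
    funext k
    exact (hAc k).symm
  have hcindep : LinearIndependent F c :=
    LinearIndependent.of_comp ψ (by rwa [hcomp])
  -- the matrix of coefficients and its column span
  set Cmat : Matrix (Fin n) (Fin m) F := Matrix.of c with hCmat
  have hCrank : Cmat.rank = n := by
    have := hcindep.rank_matrix (M := Cmat)
    simpa using this
  have hspan : Submodule.span F (Set.range Cmat.transpose) = ⊤ := by
    apply Submodule.eq_top_of_finrank_eq
    rw [show Set.range Cmat.transpose = Set.range Cmat.col from rfl,
      ← Matrix.rank_eq_finrank_span_cols, hCrank]
    simp [Module.finrank_pi]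
  obtain ⟨b, hbs, hspanb, hli⟩ := exists_linearIndependent F (Set.range Cmat.transpose)
  rw [hspan] at hspanb
  have hbfin : b.Finite := Set.Finite.subset (Set.finite_range _) hbs
  have : Fintype b := hbfin.fintype
  let bb : Module.Basis b F (Fin n → F) := Module.Basis.mk hli (by rw [Subtype.range_coe, hspanb])
  have hcardb : Fintype.card b = n := by
    rw [← Module.finrank_eq_card_basis bb]
    simp [Module.finrank_pi]
  let ψe : Fin n ≃ b := (Fintype.equivFinOfCardEq hcardb).symm
  have hmemrange : ∀ j : Fin n, (↑(ψe j) : Fin n → F) ∈ Set.range Cmat.transpose :=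
    fun j => hbs (ψe j).2
  let φ : Fin n → Fin m := fun j => Classical.choose (hmemrange j)
  have hφ : ∀ j, Cmat.transpose (φ j) = ↑(ψe j) := fun j => Classical.choose_spec (hmemrange j)
  have hφinj : Function.Injective φ := by
    intro a b' hab
    have : (↑(ψe a) : Fin n → F) = ↑(ψe b') := by rw [← hφ a, ← hφ b', hab]
    exact ψe.injective (Subtype.coe_injective this)
  -- solve for lam
  let E : Matrix (Fin n) (Fin n) F := Matrix.of fun j k => c k (φ j)
  have hEinj : Function.Injective E.mulVecLin := by
    rw [← LinearMap.ker_eq_bot, LinearMap.ker_eq_bot']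
    intro x hx
    -- the functional v ↦ ∑ k, x k * v k vanishes on all of b, hence everywhere
    let f : (Fin n → F) →ₗ[F] F := ∑ k, x k • (LinearMap.proj k : (Fin n → F) →ₗ[F] F)
    have hf : ∀ j : Fin n, f (↑(ψe j)) = 0 := by
      intro j
      have hxj : E.mulVec x j = 0 := by rw [← Matrix.mulVecLin_apply, hx]; rfl
      have : ∑ k, c k (φ j) * x k = 0 := by
        simpa [Matrix.mulVec, dotProduct, E] using hxj
      rw [← hφ j]
      simpa [f, LinearMap.sum_apply, Matrix.transpose_apply, Cmat, mul_comm] using this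
    have hftop : ∀ y, f y = 0 := by
      have hbker : b ⊆ (LinearMap.ker f : Set (Fin n → F)) := by
        intro y hy
        have : y = ↑(ψe (ψe.symm ⟨y, hy⟩)) := by simp
        rw [this] at *
        exact hf _
      have : Submodule.span F b ≤ LinearMap.ker f := Submodule.span_le.mpr hbker
      rw [hspanb] at this
      intro y
      exact this (Submodule.mem_top)
    funext k
    have := hftop (Pi.single k 1)
    simpa [f, LinearMap.sum_apply, Pi.single_apply, Finset.sum_ite_eq', mul_comm] using this
  have hEsurj : Function.Surjective E.mulVecLin :=
    (LinearMap.injective_iff_surjective).mp hEinj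
  obtain ⟨lam, hlam⟩ := hEsurj (fun j => -(cB (φ j)))
  refine ⟨lam, ?_⟩
  -- the shifted coefficient vector
  set x : Fin m → F := fun l => cB l + ∑ k, lam k * c k l with hx
  have hxφ : ∀ j, x (φ j) = 0 := by
    intro j
    have h1 : E.mulVec lam j = -(cB (φ j)) := by
      rw [← Matrix.mulVecLin_apply, hlam]
    have h2 : ∑ k, c k (φ j) * lam k = -(cB (φ j)) := by
      simpa [Matrix.mulVec, dotProduct, E] using h1
    simp only [hx]
    rw [show ∑ k, lam k * c k (φ j) = ∑ k, c k (φ j) * lam k from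
      Finset.sum_congr rfl fun k _ => mul_comm _ _, h2]
    ring
  have hkey : B + ∑ k, lam k • A k = ∑ l, x l • M l := by
    ext i j
    simp only [Matrix.add_apply, Matrix.sum_apply, Matrix.smul_apply, smul_eq_mul]
    rw [hBc]
    simp only [Matrix.sum_apply, Matrix.smul_apply, smul_eq_mul]
    have hAe : ∀ k, A k i j = ∑ l, c k l * M l i j := by
      intro k; rw [hAc k]; simp [Matrix.sum_apply]
    simp only [hAe, Finset.mul_sum]
    rw [Finset.sum_comm]
    rw [← Finset.sum_add_distrib]
    refine Finset.sum_congr rfl fun l _ => ?_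
    simp only [hx, add_mul, Finset.sum_mul]
    congr 1
    exact Finset.sum_congr rfl fun k _ => by ring
  rw [hkey]
  -- restrict the sum to the complement of the image of φ
  set Sf : Finset (Fin m) := Finset.image φ Finset.univ with hSf
  have hsum : ∑ l, x l • M l = ∑ l ∈ Finset.univ \ Sf, x l • M l := by
    symm
    apply Finset.sum_subset (Finset.sdiff_subset)
    intro l _ hl
    have hlS : l ∈ Sf := by
      by_contra h
      exact hl (Finset.mem_sdiff.mpr ⟨Finset.mem_univ _, h⟩)
    obtain ⟨j, _, rfl⟩ := Finset.mem_image.mp hlS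
    rw [hxφ j, zero_smul]
  rw [hsum]
  calc (∑ l ∈ Finset.univ \ Sf, x l • M l).rank
      ≤ ∑ l ∈ Finset.univ \ Sf, (x l • M l).rank := aux_rank_finset_sum_le _ _
    _ ≤ ∑ _l ∈ Finset.univ \ Sf, 1 := by
        refine Finset.sum_le_sum fun l _ => ?_
        have : x l • M l = Matrix.vecMulVec (x l • u l) (v l) := by
          ext i j
          simp [hM, Matrix.vecMulVec_apply, mul_assoc]
        rw [this]
        exact aux_rank_vecMulVec_le _ _
    _ = (Finset.univ \ Sf).card := by simp
    _ ≤ r := by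
        rw [Finset.card_sdiff_of_subset (Finset.subset_univ _)]
        have h1 : Sf.card = n := by
          rw [hSf, Finset.card_image_of_injective _ hφinj, Finset.card_univ, Fintype.card_fin]
        rw [h1, Finset.card_univ, Fintype.card_fin]
        omega
end

section
/- There exist dimensions d₁, d₂, d₃ and a 3-dimensional tensor T : Fin d₁ → Fin d₂ → Fin d₃ → ℚ with rational entries such that the tensor rank of T over ℚ is strictly greater than the tensor rank over ℝ of the tensor (i,j,k) ↦ ((T i j k : ℚ) : ℝ) obtained by viewing the entries of T as real numbers. -/
/-- The example tensor: slices along the third index are `I` and `[[0,1],[2,0]]`,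
a matrix with irrational eigenvalues `±√2`. -/
def myT : Fin 2 → Fin 2 → Fin 2 → ℚ := ![![![1,0],![0,1]],![![0,2],![1,0]]]

lemma no_rat_sq_two (q : ℚ) : q^2 ≠ 2 := by
  intro h
  have h2 : ((q:ℝ))^2 = 2 := by exact_mod_cast h
  have hs : Real.sqrt 2 = ((|q| : ℚ) : ℝ) := by
    rw [show ((2:ℝ)) = ((q:ℝ))^2 from h2.symm, Real.sqrt_sq_eq_abs]
    push_cast
    ring
  exact irrational_sqrt_two ⟨|q|, hs.symm⟩

lemma real_rank_le : tensorRank (fun i j k => ((myT i j k : ℚ) : ℝ)) ≤ 2 := by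
  apply Nat.sInf_le
  have h2 : Real.sqrt 2 * Real.sqrt 2 = 2 := Real.mul_self_sqrt (by norm_num)
  refine ⟨![![1/2, Real.sqrt 2/2], ![1/2, -(Real.sqrt 2/2)]],
         ![![1, Real.sqrt 2/2], ![1, -(Real.sqrt 2/2)]],
         ![![1, Real.sqrt 2], ![1, -(Real.sqrt 2)]], ?_⟩
  intro i j k
  fin_cases i <;> fin_cases j <;> fin_cases k <;>
    simp [myT, Fin.sum_univ_two, Matrix.vecHead, Matrix.vecTail] <;> nlinarith [h2]

lemma key (r : ℕ) (u v w : Fin r → Fin 2 → ℚ)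
    (h : ∀ i j k, myT i j k = ∑ l, u l i * v l j * w l k) : 3 ≤ r := by
  by_contra hlt
  push_neg at hlt
  interval_cases r
  · have := h 0 0 0
    simp [myT] at this
  · have h000 := h 0 0 0; have h010 := h 0 1 0; have h100 := h 1 0 0; have h110 := h 1 1 0
    simp only [myT, Fin.sum_univ_one, Matrix.cons_val_zero, Matrix.cons_val_one,
      Matrix.head_cons] at h000 h010 h100 h110
    have : (1:ℚ) = 0 := by
      linear_combination (u 0 1 * v 0 1 * w 0 0) * h000 + h110
        - (u 0 1 * v 0 0 * w 0 0) * h010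
    exact one_ne_zero this
  · have h000 := h 0 0 0; have h001 := h 0 0 1; have h010 := h 0 1 0; have h011 := h 0 1 1
    have h100 := h 1 0 0; have h101 := h 1 0 1; have h110 := h 1 1 0; have h111 := h 1 1 1
    simp only [myT, Fin.sum_univ_two, Matrix.cons_val_zero, Matrix.cons_val_one,
      Matrix.head_cons] at h000 h001 h010 h011 h100 h101 h110 h111
    set a0 := u 0 0; set b0 := u 0 1; set c0 := v 0 0; set d0 := v 0 1
    set e0 := w 0 0; set f0 := w 0 1
    set a1 := u 1 0; set b1 := u 1 1; set c1 := v 1 0; set d1 := v 1 1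
    set e1 := w 1 0; set f1 := w 1 1
    set ν := e0 * f1 - f0 * e1 with hν
    have hA : -f0 = a1 * c1 * ν := by linear_combination e0 * h001 - f0 * h000
    have hB : e0 = a1 * d1 * ν := by linear_combination e0 * h011 - f0 * h010
    have hC : 2 * e0 = b1 * c1 * ν := by linear_combination e0 * h101 - f0 * h100
    have hD : -f0 = b1 * d1 * ν := by linear_combination e0 * h111 - f0 * h110
    have hf : f0 ^ 2 = 2 * e0 ^ 2 := by
      have e1' : f0 ^ 2 = (a1 * c1 * ν) * (b1 * d1 * ν) := by rw [← hA, ← hD]; ring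
      have e2' : 2 * e0 ^ 2 = (a1 * d1 * ν) * (b1 * c1 * ν) := by rw [← hB, ← hC]; ring
      rw [e1', e2']; ring
    have he0 : e0 ≠ 0 := by
      intro he
      have hd : (1:ℚ) = (a0*c0*e0 + a1*c1*e1) * (b0*d0*e0 + b1*d1*e1)
          - (a0*d0*e0 + a1*d1*e1) * (b0*c0*e0 + b1*c1*e1) := by
        rw [← h000, ← h110, ← h010, ← h100]; norm_num
      rw [he] at hd
      have : (1:ℚ) = 0 := by linear_combination hd
      exact one_ne_zero this
    have : (f0 / e0) ^ 2 = 2 := by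
      field_simp
      linarith [hf]
    exact no_rat_sq_two _ this

lemma rat_rank_ge : 3 ≤ tensorRank myT := by
  have hne : {r : ℕ | ∃ (u : Fin r → Fin 2 → ℚ) (v : Fin r → Fin 2 → ℚ)
      (w : Fin r → Fin 2 → ℚ), ∀ i j k, myT i j k = ∑ l, u l i * v l j * w l k}.Nonempty := by
    refine ⟨4, ![![1,0],![1,0],![0,1],![0,1]], ![![1,0],![0,1],![1,0],![0,1]],
      ![![1,0],![0,1],![0,2],![1,0]], ?_⟩
    intro i j k
    fin_cases i <;> fin_cases j <;> fin_cases k <;>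
      norm_num [myT, Fin.sum_univ_four, Matrix.vecHead, Matrix.vecTail, Matrix.cons_val_two, Matrix.cons_val_three]
  obtain ⟨u, v, w, h⟩ := Nat.sInf_mem hne
  exact key _ u v w h

/-- There is a tensor with rational entries whose tensor rank over `ℚ` is strictly
greater than the tensor rank over `ℝ` of the same tensor viewed with real entries. -/
theorem exists_tensor_rank_rat_gt_rank_real :
    ∃ (d₁ d₂ d₃ : ℕ) (T : Fin d₁ → Fin d₂ → Fin d₃ → ℚ),
      tensorRank (fun i j k => ((T i j k : ℚ) : ℝ)) < tensorRank T := by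
  exact ⟨2, 2, 2, myT, lt_of_le_of_lt real_rank_le (lt_of_lt_of_le (by norm_num) rat_rank_ge)⟩
end

section
/- Let R be a commutative ring, let n ≥ 1, and let M be an (n+1) × (n+1) matrix over R such that for some index k, the n × n matrix obtained from M by deleting row k and column k is the identity matrix. Then det M = M k k − Σ_{i ≠ k} (M i k) * (M k i). -/
open Finset

section Aux

variable {R : Type*} [CommRing R] {m : Type*} [Fintype m] [DecidableEq m]

lemma det_expand_row_aux (A : Matrix m m R) (k : m) :
    A.det = ∑ j, A k j * (A.updateRow k (Pi.single j 1)).det := by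
  have h : A = A.updateRow k (∑ j, A k j • (Pi.single j 1 : m → R)) := by
    ext i j
    rcases eq_or_ne i k with rfl | hi
    · simp [Matrix.updateRow_apply, Pi.single_apply, eq_comm]
    · simp [Matrix.updateRow_apply, hi]
  conv_lhs => rw [h]
  have := (Matrix.detRowAlternating : (m → R) [⋀^m]→ₗ[R] R).map_update_sum
    Finset.univ k (fun j => A k j • (Pi.single j 1 : m → R)) A
  rw [show A.updateRow k (∑ j, A k j • (Pi.single j 1 : m → R))
      = Function.update A k (∑ j, A k j • (Pi.single j 1 : m → R)) from rfl]
  rw [show Matrix.det (Function.update A k (∑ j, A k j • (Pi.single j 1 : m → R)))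
      = (Matrix.detRowAlternating : (m → R) [⋀^m]→ₗ[R] R)
        (Function.update A k (∑ j, A k j • (Pi.single j 1 : m → R))) from rfl, this]
  refine Finset.sum_congr rfl fun j _ => ?_
  have : (Matrix.detRowAlternating : (m → R) [⋀^m]→ₗ[R] R)
      (Function.update A k (A k j • (Pi.single j 1 : m → R)))
      = (A.updateRow k (A k j • (Pi.single j 1 : m → R))).det := rfl
  rw [this, Matrix.det_updateRow_smul]

lemma det_expand_col_aux (A : Matrix m m R) (k : m) :
    A.det = ∑ i, A i k * (A.updateCol k (Pi.single i 1)).det := by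
  rw [← Matrix.det_transpose A, det_expand_row_aux A.transpose k]
  refine Finset.sum_congr rfl fun i _ => ?_
  rw [Matrix.transpose_apply, Matrix.updateRow_transpose, Matrix.det_transpose]

end Aux

/-- If deleting row `k` and column `k` of an `(n+1) × (n+1)` matrix `M` over a
commutative ring yields the identity matrix, then
`det M = M k k - ∑_{i ≠ k} M i k * M k i`. -/
theorem det_of_offdiag_identity {R : Type*} [CommRing R] {n : ℕ} (hn : 1 ≤ n)
    (M : Matrix (Fin (n + 1)) (Fin (n + 1)) R) (k : Fin (n + 1))
    (hM : ∀ i j, i ≠ k → j ≠ k → M i j = if i = j then 1 else 0) :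
    M.det = M k k - ∑ i ∈ univ.filter (· ≠ k), M i k * M k i := by
  classical
  set P : Fin (n + 1) → Fin (n + 1) → Matrix (Fin (n + 1)) (Fin (n + 1)) R := fun j i =>
    (M.updateRow k (Pi.single j 1)).updateCol k (Pi.single i 1) with hP
  have hPentry : ∀ j i a b, P j i a b =
      if b = k then (if a = i then 1 else 0)
      else if a = k then (if b = j then 1 else 0) else M a b := by
    intro j i a b
    rcases eq_or_ne b k with hb | hb
    · simp [hP, hb, Matrix.updateCol_apply, Pi.single_apply]
    · simp [hP, Matrix.updateCol_apply, Matrix.updateRow_apply, hb, Pi.single_apply]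
  have hPkk : (P k k).det = 1 := by
    have : P k k = 1 := by
      ext a b
      rw [hPentry, Matrix.one_apply]
      rcases eq_or_ne b k with hb | hb
      · simp [hb]
      · rcases eq_or_ne a k with ha | ha
        · simp [ha, hb, Ne.symm hb]
        · rw [if_neg hb, if_neg ha, hM a b ha hb]
    rw [this, Matrix.det_one]
  have hPzero : ∀ j i, i ≠ k → i ≠ j → (P j i).det = 0 := by
    intro j i hik hij
    rcases eq_or_ne j k with hjk | hjk
    · -- row k is zero
      apply Matrix.det_eq_zero_of_row_eq_zero k
      intro b
      rw [hPentry]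
      rcases eq_or_ne b k with hb | hb
      · simp [hb, Ne.symm hik]
      · simp [hb, hjk]
    · -- rows k and j are equal
      apply Matrix.det_zero_of_row_eq (Ne.symm hjk)
      funext b
      rw [hPentry, hPentry]
      rcases eq_or_ne b k with hb | hb
      · simp [hb, Ne.symm hik, Ne.symm hij]
      · rw [if_neg hb, if_neg hb, if_pos rfl, if_neg hjk, hM j b hjk hb]
        rcases eq_or_ne b j with hbj | hbj
        · simp [hbj]
        · simp [hbj, Ne.symm hbj]
  have hPswap : ∀ j, j ≠ k → (P j j).det = -1 := by
    intro j hjk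
    have hrow : P j j j = Pi.single j 1 + Pi.single k (1 : R) := by
      funext b
      rw [hPentry]
      rcases eq_or_ne b k with hb | hb
      · simp [hb, Pi.single_apply, hjk, Ne.symm hjk]
      · rw [if_neg hb, if_neg hjk, hM j b hjk hb]
        rcases eq_or_ne b j with hbj | hbj
        · simp [hbj, Pi.single_apply, hjk]
        · simp [hbj, Ne.symm hbj, Pi.single_apply, hb]
    have hPj : P j j = (P j j).updateRow j (Pi.single j 1 + Pi.single k 1) := by
      rw [← hrow, Matrix.updateRow_eq_self]
    rw [hPj, Matrix.det_updateRow_add]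
    have h1 : ((P j j).updateRow j (Pi.single j (1:R))).det = 0 := by
      apply Matrix.det_zero_of_row_eq hjk
      funext b
      rw [Matrix.updateRow_apply, Matrix.updateRow_apply, if_pos rfl,
        if_neg (Ne.symm hjk), hPentry]
      rcases eq_or_ne b k with hb | hb
      · simp [hb, Pi.single_apply, hjk, Ne.symm hjk]
      · rw [if_neg hb, if_pos rfl]
        simp [Pi.single_apply]
    have h2 : ((P j j).updateRow j (Pi.single k (1:R))) =
        (Equiv.swap j k).permMatrix R := by
      ext a b
      simp only [Equiv.Perm.permMatrix, PEquiv.toMatrix_apply, Equiv.toPEquiv_apply,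
        Option.mem_def, Option.some.injEq]
      rw [Matrix.updateRow_apply]
      rcases eq_or_ne a j with haj | haj
      · rw [if_pos haj, haj, Equiv.swap_apply_left]
        rcases eq_or_ne b k with hbk | hbk
        · simp [hbk, Pi.single_apply]
        · simp [hbk, Ne.symm hbk, Pi.single_apply]
      · rw [if_neg haj, hPentry]
        rcases eq_or_ne a k with hak | hak
        · rw [hak, Equiv.swap_apply_right]
          rcases eq_or_ne b k with hbk | hbk
          · simp [hbk, Ne.symm hjk, hjk]
          · rw [if_neg hbk, if_pos rfl]
            rcases eq_or_ne b j with hbj | hbj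
            · simp [hbj]
            · simp [hbj, Ne.symm hbj]
        · rw [Equiv.swap_apply_of_ne_of_ne haj hak]
          rcases eq_or_ne b k with hbk | hbk
          · simp [hbk, haj, hak]
          · rw [if_neg hbk, if_neg hak, hM a b hak hbk]
    rw [h1, h2, Matrix.det_permutation, Equiv.Perm.sign_swap hjk]
    simp
  -- expand det along row k, then each along column k
  rw [det_expand_row_aux M k]
  have hcol : ∀ j : Fin (n + 1), (M.updateRow k (Pi.single j 1)).det
      = ∑ i, (M.updateRow k (Pi.single j 1)) i k * (P j i).det := by
    intro j
    rw [det_expand_col_aux (M.updateRow k (Pi.single j 1)) k]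
  have hNentry : ∀ j i : Fin (n + 1), (M.updateRow k (Pi.single j 1)) i k
      = if i = k then (if k = j then 1 else 0) else M i k := by
    intro j i
    rcases eq_or_ne i k with hik | hik
    · simp [hik, Matrix.updateRow_apply, Pi.single_apply]
    · simp [Matrix.updateRow_apply, hik]
  have hNdet : ∀ j : Fin (n + 1), (M.updateRow k (Pi.single j 1)).det
      = if j = k then 1 else - (M j k) := by
    intro j
    rw [hcol j]
    rcases eq_or_ne j k with hjk | hjk
    · rw [hjk, if_pos rfl, Finset.sum_eq_single k]
      · rw [hNentry, if_pos rfl, if_pos rfl, hPkk, one_mul]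
      · intro i _ hik
        rw [hPzero k i hik hik, mul_zero]
      · simp
    · rw [if_neg hjk, Finset.sum_eq_single j]
      · rw [hNentry, if_neg hjk, hPswap j hjk]
        ring
      · intro i _ hij
        rcases eq_or_ne i k with hik | hik
        · rw [hik, hNentry, if_pos rfl, if_neg (Ne.symm hjk), zero_mul]
        · rw [hPzero j i hik hij, mul_zero]
      · simp
  simp_rw [hNdet]
  rw [← Finset.sum_filter_add_sum_filter_not Finset.univ (· = k)
      (fun j => M k j * (if j = k then 1 else -(M j k)))]
  have h1 : Finset.univ.filter (· = k) = {k} := by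
    ext a; simp
  rw [h1, Finset.sum_singleton, if_pos rfl, mul_one, sub_eq_add_neg, ← Finset.sum_neg_distrib]
  congr 1
  apply Finset.sum_congr
  · ext a; simp
  · intro j hj
    simp only [Finset.mem_filter] at hj
    rw [if_neg hj.2]
    ring
end

section
/- Let F be a field, let n ≥ 1, and let M be an (n+1) × (n+1) matrix over F such that for some index k, the n × n matrix obtained from M by deleting row k and column k is the identity matrix. Then the matrix rank of M is at least n, and the rank of M is at most n (equivalently, exactly n) if and only if M k k = Σ_{i ≠ k} (M i k) * (M k i). -/
open Finset

lemma det_aux {F : Type*} [Field F] {n : ℕ}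
    (M : Matrix (Fin (n + 1)) (Fin (n + 1)) F) (k : Fin (n + 1))
    (hM : ∀ i j, i ≠ k → j ≠ k → M i j = if i = j then 1 else 0) :
    M.det = M k k - ∑ j : Fin n, M k (k.succAbove j) * M (k.succAbove j) k := by
  classical
  let e : Fin (n + 1) ≃ Fin n ⊕ Unit :=
    (finSuccEquiv' k).trans (Equiv.optionEquivSumPUnit (Fin n))
  let B : Matrix (Fin n) Unit F := fun i _ => M (k.succAbove i) k
  let C : Matrix Unit (Fin n) F := fun _ j => M k (k.succAbove j)
  let D : Matrix Unit Unit F := fun _ _ => M k k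
  have hsub : M.submatrix e.symm e.symm = Matrix.fromBlocks 1 B C D := by
    ext i j
    have he1 : ∀ j : Fin n, e.symm (Sum.inl j) = k.succAbove j := fun j => by
      simp [e, finSuccEquiv'_symm_some]
    have he2 : ∀ u : Unit, e.symm (Sum.inr u) = k := fun u => by
      simp [e, finSuccEquiv'_symm_none]
    rcases i with i | i <;> rcases j with j | j <;>
      simp only [Matrix.fromBlocks_apply₁₁,
        Matrix.fromBlocks_apply₁₂, Matrix.fromBlocks_apply₂₁, Matrix.fromBlocks_apply₂₂] <;>
      simp only [Matrix.submatrix_apply, he1, he2, Matrix.fromBlocks_apply₁₁,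
        Matrix.fromBlocks_apply₁₂, Matrix.fromBlocks_apply₂₁, Matrix.fromBlocks_apply₂₂,
        B, C, D]
    · rw [hM _ _ (Fin.succAbove_ne k i) (Fin.succAbove_ne k j)]
      simp [Matrix.one_apply, Fin.succAbove_right_injective.eq_iff]
  have := Matrix.det_submatrix_equiv_self e.symm M
  rw [hsub, Matrix.det_fromBlocks_one₁₁] at this
  rw [← this, Matrix.det_unique]
  rw [Matrix.sub_apply, Matrix.mul_apply]

/-- If deleting row `k` and column `k` of an `(n+1) × (n+1)` matrix `M` over a field
yields the identity matrix, then `M` has rank at least `n`, and the rank of `M` is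
at most `n` (equivalently, exactly `n`) iff `M k k = ∑_{i ≠ k} M i k * M k i`. -/
theorem rank_of_offdiag_identity {F : Type*} [Field F] {n : ℕ} (hn : 1 ≤ n)
    (M : Matrix (Fin (n + 1)) (Fin (n + 1)) F) (k : Fin (n + 1))
    (hM : ∀ i j, i ≠ k → j ≠ k → M i j = if i = j then 1 else 0) :
    n ≤ M.rank ∧
    (M.rank ≤ n ↔ M k k = ∑ i ∈ univ.filter (· ≠ k), M i k * M k i) := by
  classical
  -- sum rewriting
  have hsum : ∑ i ∈ univ.filter (· ≠ k), M i k * M k i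
      = ∑ j : Fin n, M k (k.succAbove j) * M (k.succAbove j) k := by
    rw [Finset.filter_ne' univ k]
    rw [show (univ : Finset (Fin (n+1))).erase k
        = Finset.image (k.succAbove) univ from ?_]
    · rw [Finset.sum_image (fun a _ b _ h => Fin.succAbove_right_injective h)]
      exact Finset.sum_congr rfl fun j _ => mul_comm _ _
    · ext i
      simp only [Finset.mem_erase, Finset.mem_univ, and_true, Finset.mem_image, true_and]
      constructor
      · intro hi
        obtain ⟨j, hj⟩ := Fin.exists_succAbove_eq hi
        exact ⟨j, hj⟩
      · rintro ⟨j, _, rfl⟩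
        exact Fin.succAbove_ne k j
  have hdet := det_aux M k hM
  -- linear independence of the rows ≠ k
  have hli : LinearIndependent F (fun j : Fin n => M (k.succAbove j)) := by
    apply LinearIndependent.of_comp (LinearMap.funLeft F F k.succAbove)
    have hcomp : (⇑(LinearMap.funLeft F F k.succAbove) ∘ fun j => M (k.succAbove j))
        = fun j : Fin n => Pi.single j (1 : F) := by
      funext j i
      simp only [Function.comp_apply, LinearMap.funLeft_apply]
      rw [hM _ _ (Fin.succAbove_ne k j) (Fin.succAbove_ne k i)]
      rcases eq_or_ne j i with rfl | h
      · simp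
      · simp [Fin.succAbove_right_inj, h, Pi.single_apply, h.symm]
    rw [hcomp]
    convert (Pi.basisFun F (Fin n)).linearIndependent using 1
    funext j
    simp [Pi.basisFun_apply]
  have hrank_ge : n ≤ M.rank := by
    have h1 : Module.finrank F (Submodule.span F
        (Set.range fun j : Fin n => M (k.succAbove j))) = n := by
      rw [finrank_span_eq_card hli, Fintype.card_fin]
    have h2 : Submodule.span F (Set.range fun j : Fin n => M (k.succAbove j))
        ≤ Submodule.span F (Set.range M) := by
      apply Submodule.span_mono
      rintro _ ⟨j, rfl⟩
      exact ⟨k.succAbove j, rfl⟩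
    calc n = _ := h1.symm
      _ ≤ Module.finrank F (Submodule.span F (Set.range M)) := Submodule.finrank_mono h2
      _ = M.rank := (M.rank_eq_finrank_span_row).symm
  refine ⟨hrank_ge, ?_⟩
  rw [hsum]
  constructor
  · intro hle
    by_contra hne
    have hdet0 : M.det ≠ 0 := by rw [hdet]; exact sub_ne_zero_of_ne hne
    have : M.rank = n + 1 := by
      rw [Matrix.rank_of_isUnit M ((Matrix.isUnit_iff_isUnit_det M).mpr
        (isUnit_iff_ne_zero.mpr hdet0)), Fintype.card_fin]
    omega
  · intro heq
    have hdet0 : M.det = 0 := by rw [hdet, heq, sub_self]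
    obtain ⟨v, hv, hmv⟩ := (Matrix.exists_mulVec_eq_zero_iff).mpr hdet0
    have hker : LinearMap.ker M.mulVecLin ≠ ⊥ := by
      intro h
      exact hv (by simpa [h, LinearMap.mem_ker] using
        (LinearMap.mem_ker.mpr (show M.mulVecLin v = 0 by simpa using hmv)))
    have hker1 : 1 ≤ Module.finrank F (LinearMap.ker M.mulVecLin) := by
      rw [Nat.one_le_iff_ne_zero]
      intro h0
      exact hker (Submodule.finrank_eq_zero.mp h0)
    have hrn := LinearMap.finrank_range_add_finrank_ker M.mulVecLin
    simp only [Module.finrank_pi, Fintype.card_fin] at hrn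
    have : M.rank = Module.finrank F (LinearMap.range M.mulVecLin) := rfl
    omega
end

section
/- Let F be a field and let a, b, c ∈ F. The 3 × 3 matrix over F with rows (1, 0, a), (0, 1, b), (1, 1, c) has determinant c − (a + b); its matrix rank is at least 2, and its rank equals 2 if and only if c = a + b (otherwise its rank is 3). -/
/-- The addition gadget: the 3 × 3 matrix with rows `(1,0,a)`, `(0,1,b)`, `(1,1,c)`
has determinant `c - (a + b)`, rank at least 2, rank 2 iff `c = a + b`, and rank 3
otherwise. -/
theorem addition_gadget {F : Type*} [Field F] (a b c : F) :
    (!![(1 : F), 0, a; 0, 1, b; 1, 1, c]).det = c - (a + b) ∧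
    2 ≤ (!![(1 : F), 0, a; 0, 1, b; 1, 1, c]).rank ∧
    ((!![(1 : F), 0, a; 0, 1, b; 1, 1, c]).rank = 2 ↔ c = a + b) ∧
    (c ≠ a + b → (!![(1 : F), 0, a; 0, 1, b; 1, 1, c]).rank = 3) := by
  set r0 : Fin 3 → F := ![1, 0, a] with hr0
  set r1 : Fin 3 → F := ![0, 1, b] with hr1
  set A := !![(1 : F), 0, a; 0, 1, b; 1, 1, c] with hA
  have hdet : A.det = c - (a + b) := by
    simp [hA, Matrix.det_fin_three, Matrix.vecHead, Matrix.vecTail]; ring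
  have hli : LinearIndependent F ![r0, r1] := by
    rw [LinearIndependent.pair_iff]
    intro s t h
    have h0 := congrFun h 0
    have h1 := congrFun h 1
    simp [hr0, hr1] at h0 h1
    exact ⟨h0, h1⟩
  have hcard : Module.finrank F (Submodule.span F (Set.range ![r0, r1])) = 2 := by
    rw [finrank_span_eq_card hli]; simp
  have hrank2 : 2 ≤ A.rank := by
    rw [Matrix.rank_eq_finrank_span_row]
    calc 2 = Module.finrank F (Submodule.span F (Set.range ![r0, r1])) := hcard.symm
      _ ≤ _ := by
          apply Submodule.finrank_mono
          apply Submodule.span_mono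
          rintro x ⟨i, rfl⟩
          fin_cases i
          · exact ⟨0, rfl⟩
          · exact ⟨1, rfl⟩
  have hupper : c = a + b → A.rank ≤ 2 := by
    intro h
    rw [Matrix.rank_eq_finrank_span_row]
    have hsub : Set.range A ⊆ (Submodule.span F (Set.range ![r0, r1]) : Set (Fin 3 → F)) := by
      rintro x ⟨i, rfl⟩
      fin_cases i
      · exact Submodule.subset_span ⟨0, rfl⟩
      · exact Submodule.subset_span ⟨1, rfl⟩
      · have h2 : A 2 = r0 + r1 := by
          ext j
          fin_cases j <;> simp [hA, hr0, hr1, h, Matrix.vecHead, Matrix.vecTail]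
        show A 2 ∈ Submodule.span F (Set.range ![r0, r1])
        rw [h2]
        exact Submodule.add_mem _ (Submodule.subset_span ⟨0, rfl⟩)
          (Submodule.subset_span ⟨1, rfl⟩)
    calc Module.finrank F (Submodule.span F (Set.range A))
        ≤ Module.finrank F (Submodule.span F (Set.range ![r0, r1])) :=
          Submodule.finrank_mono (Submodule.span_le.2 hsub)
      _ = 2 := hcard
  have hfull : c ≠ a + b → A.rank = 3 := by
    intro h
    have hdet0 : A.det ≠ 0 := by rw [hdet]; exact sub_ne_zero_of_ne h
    have : IsUnit A := (Matrix.isUnit_iff_isUnit_det A).2 (isUnit_iff_ne_zero.2 hdet0)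
    rw [Matrix.rank_of_isUnit A this]; simp
  refine ⟨hdet, hrank2, ⟨fun hr => ?_, fun h => le_antisymm (hupper h) hrank2⟩, hfull⟩
  by_contra h
  rw [hfull h] at hr
  exact (by norm_num : (3 : ℕ) ≠ 2) hr
end

section
/- Let F be a field and let a, b, c ∈ F. The 3 × 3 matrix over F with rows (1, 0, c), (0, 1, a), (−1, b, 0) has determinant c − a*b; its matrix rank is at least 2, and its rank equals 2 if and only if c = a * b (otherwise its rank is 3). -/
open Matrix FiniteDimensional

lemma gadget_rank_three {F : Type*} [Field F] (M : Matrix (Fin 3) (Fin 3) F)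
    (h : M.det ≠ 0) : M.rank = 3 := by
  have hU : IsUnit M := (Matrix.isUnit_iff_isUnit_det M).mpr (isUnit_iff_ne_zero.mpr h)
  simpa using Matrix.rank_of_isUnit M hU

lemma gadget_det_ne_of_rank_three {F : Type*} [Field F] (M : Matrix (Fin 3) (Fin 3) F)
    (h : M.rank = 3) : M.det ≠ 0 := by
  have hrange : LinearMap.range M.mulVecLin = ⊤ := by
    apply Submodule.eq_top_of_finrank_eq
    rw [← Matrix.rank, h]
    simp [Module.finrank_fintype_fun_eq_card]
  have hsurj : Function.Surjective M.mulVec := by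
    intro y
    obtain ⟨x, hx⟩ := LinearMap.range_eq_top.mp hrange y
    exact ⟨x, hx⟩
  have hU : IsUnit M := Matrix.mulVec_surjective_iff_isUnit.mp hsurj
  exact ((Matrix.isUnit_iff_isUnit_det M).mp hU).ne_zero

lemma gadget_rank_ge_two {F : Type*} [Field F] (a b c : F) :
    2 ≤ (!![(1 : F), 0, c; 0, 1, a; -1, b, 0]).rank := by
  set M := !![(1 : F), 0, c; 0, 1, a; -1, b, 0] with hM
  have hli : LinearIndependent F ![M 0, M 1] := by
    rw [Fintype.linearIndependent_iff]
    intro g hg i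
    have h0 := congrFun hg 0
    have h1 := congrFun hg 1
    simp [Fin.sum_univ_two, hM] at h0 h1
    fin_cases i <;> simpa
  have hle : Submodule.span F (Set.range ![M 0, M 1]) ≤ Submodule.span F (Set.range M) := by
    apply Submodule.span_mono
    rintro x ⟨i, rfl⟩
    fin_cases i
    · exact ⟨0, rfl⟩
    · exact ⟨1, rfl⟩
  have h2 : Module.finrank F (Submodule.span F (Set.range ![M 0, M 1])) = 2 := by
    rw [finrank_span_eq_card hli]
    simp
  rw [M.rank_eq_finrank_span_row, ← h2]
  exact Submodule.finrank_mono hle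

/-- The multiplication gadget: the 3 × 3 matrix with rows `(1,0,c)`, `(0,1,a)`,
`(-1,b,0)` has determinant `c - a*b`, rank at least 2, rank 2 iff `c = a * b`, and
rank 3 otherwise. -/
theorem multiplication_gadget {F : Type*} [Field F] (a b c : F) :
    (!![(1 : F), 0, c; 0, 1, a; -1, b, 0]).det = c - a * b ∧
    2 ≤ (!![(1 : F), 0, c; 0, 1, a; -1, b, 0]).rank ∧
    ((!![(1 : F), 0, c; 0, 1, a; -1, b, 0]).rank = 2 ↔ c = a * b) ∧
    (c ≠ a * b → (!![(1 : F), 0, c; 0, 1, a; -1, b, 0]).rank = 3) := by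
  have hdet : (!![(1 : F), 0, c; 0, 1, a; -1, b, 0]).det = c - a * b := by
    simp [Matrix.det_fin_three]; ring
  refine ⟨hdet, gadget_rank_ge_two a b c, ?_, ?_⟩
  · constructor
    · intro hr
      by_contra hne
      have h3 := gadget_rank_three _ (by rw [hdet]; exact sub_ne_zero_of_ne hne)
      omega
    · intro hc
      have hlt : (!![(1 : F), 0, c; 0, 1, a; -1, b, 0]).rank ≠ 3 := by
        intro h3
        have := gadget_det_ne_of_rank_three _ h3
        rw [hdet, hc] at this
        simp at this
      have hle : (!![(1 : F), 0, c; 0, 1, a; -1, b, 0]).rank ≤ 3 := by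
        simpa using (!![(1 : F), 0, c; 0, 1, a; -1, b, 0]).rank_le_card_width
      have := gadget_rank_ge_two a b c
      omega
  · intro hne
    exact gadget_rank_three _ (by rw [hdet]; exact sub_ne_zero_of_ne hne)
end
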